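/- arXiv:1003.4534 — 2 statements merged into one kernel-verified Lean document; each statement's English description precedes it below -/
import Mathlib

section
/- A left h-ideal P of a hemiring R is prime (for any left h-ideals A, B, AB ⊆ P implies A ⊆ P or B ⊆ P) if and only if for all a, b ∈ R, aRb ⊆ P implies a ∈ P or b ∈ P. -/
open Pointwise

def IsLeftHIdeal {R : Type*} [NonUnitalSemiring R] (I : Set R) : Prop :=
  I.Nonempty ∧ (∀ a ∈ I, ∀ b ∈ I, a + b ∈ I) ∧
    (∀ r : R, ∀ a ∈ I, r * a ∈ I) ∧
    (∀ a ∈ I, ∀ b ∈ I, ∀ x y : R, x + a + y = b + y → x ∈ I)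

def IsRightHIdeal {R : Type*} [NonUnitalSemiring R] (I : Set R) : Prop :=
  I.Nonempty ∧ (∀ a ∈ I, ∀ b ∈ I, a + b ∈ I) ∧
    (∀ r : R, ∀ a ∈ I, a * r ∈ I) ∧
    (∀ a ∈ I, ∀ b ∈ I, ∀ x y : R, x + a + y = b + y → x ∈ I)

def IsHIdeal {R : Type*} [NonUnitalSemiring R] (I : Set R) : Prop :=
  I.Nonempty ∧ (∀ a ∈ I, ∀ b ∈ I, a + b ∈ I) ∧
    (∀ r : R, ∀ a ∈ I, r * a ∈ I) ∧ (∀ r : R, ∀ a ∈ I, a * r ∈ I) ∧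
    (∀ a ∈ I, ∀ b ∈ I, ∀ x y : R, x + a + y = b + y → x ∈ I)

def hCl {R : Type*} [NonUnitalSemiring R] (A : Set R) : Set R :=
  {x | ∃ a ∈ A, ∃ b ∈ A, ∃ y : R, x + a + y = b + y}

section aux
variable {R : Type*} [NonUnitalSemiring R]

lemma subset_hCl {S : Set R} (hadd : ∀ a ∈ S, ∀ b ∈ S, a + b ∈ S) : S ⊆ hCl S := by
  intro x hx
  exact ⟨x, hx, x + x, hadd x hx x hx, 0, rfl⟩

lemma hCl_add {S : Set R} (hadd : ∀ a ∈ S, ∀ b ∈ S, a + b ∈ S)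
    {x x' : R} (hx : x ∈ hCl S) (hx' : x' ∈ hCl S) : x + x' ∈ hCl S := by
  obtain ⟨p, hp, q, hq, y, e1⟩ := hx
  obtain ⟨p', hp', q', hq', y', e2⟩ := hx'
  refine ⟨p + p', hadd _ hp _ hp', q + q', hadd _ hq _ hq', y + y', ?_⟩
  calc (x + x') + (p + p') + (y + y') = (x + p + y) + (x' + p' + y') := by abel
    _ = (q + y) + (q' + y') := by rw [e1, e2]
    _ = (q + q') + (y + y') := by abel

lemma hCl_mul {S : Set R} (hmul : ∀ r : R, ∀ a ∈ S, r * a ∈ S)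
    {x : R} (r : R) (hx : x ∈ hCl S) : r * x ∈ hCl S := by
  obtain ⟨p, hp, q, hq, y, e1⟩ := hx
  refine ⟨r * p, hmul r _ hp, r * q, hmul r _ hq, r * y, ?_⟩
  have e := congrArg (r * ·) e1
  simp only [mul_add] at e
  exact e

lemma hCl_h {S : Set R} (hadd : ∀ a ∈ S, ∀ b ∈ S, a + b ∈ S)
    {c d x y : R} (hc : c ∈ hCl S) (hd : d ∈ hCl S)
    (h : x + c + y = d + y) : x ∈ hCl S := by
  obtain ⟨p, hp, q, hq, z, e1⟩ := hc
  obtain ⟨p', hp', q', hq', z', e2⟩ := hd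
  refine ⟨q + p', hadd _ hq _ hp', q' + p, hadd _ hq' _ hp, y + z + z', ?_⟩
  calc x + (q + p') + (y + z + z')
      = x + (q + z) + (p' + (y + z')) := by abel
    _ = x + (c + p + z) + (p' + (y + z')) := by rw [e1]
    _ = (x + c + y) + (p + z + (p' + z')) := by abel
    _ = (d + y) + (p + z + (p' + z')) := by rw [h]
    _ = (d + p' + z') + (y + (p + z)) := by abel
    _ = (q' + z') + (y + (p + z)) := by rw [e2]
    _ = (q' + p) + (y + z + z') := by abel

lemma hCl_isLeftHIdeal {S : Set R} (hne : S.Nonempty)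
    (hadd : ∀ a ∈ S, ∀ b ∈ S, a + b ∈ S)
    (hmul : ∀ r : R, ∀ a ∈ S, r * a ∈ S) : IsLeftHIdeal (hCl S) :=
  ⟨hne.mono (subset_hCl hadd), fun _ h _ h' => hCl_add hadd h h',
   fun r _ h => hCl_mul hmul r h, fun _ hc _ hd x y h => hCl_h hadd hc hd h⟩

lemma zero_mem_of_leftH {P : Set R} (hP : IsLeftHIdeal P) : (0 : R) ∈ P := by
  obtain ⟨c, hc⟩ := hP.1
  exact hP.2.2.2 c hc c hc 0 0 (by rw [zero_add])

lemma nsmul_mem_of_leftH {P : Set R} (hP : IsLeftHIdeal P) (n : ℕ) {x : R} (hx : x ∈ P) :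
    n • x ∈ P := by
  induction n with
  | zero => simpa using zero_mem_of_leftH hP
  | succ n ih => rw [succ_nsmul]; exact hP.2.1 _ ih _ hx

lemma key_mul_mem {P : Set R} (hP : IsLeftHIdeal P) {S T : Set R}
    (hST : ∀ p ∈ S, ∀ q ∈ T, p * q ∈ P)
    {u v : R} (hu : u ∈ hCl S) (hv : v ∈ hCl T) : u * v ∈ P := by
  obtain ⟨p, hp, q, hq, y, e1⟩ := hu
  obtain ⟨p', hp', q', hq', z, e2⟩ := hv
  have h1 : u * p' ∈ P := by
    have e := congrArg (· * p') e1
    simp only [add_mul] at e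
    exact hP.2.2.2 _ (hST p hp p' hp') _ (hST q hq p' hp') _ _ e
  have h2 : u * q' ∈ P := by
    have e := congrArg (· * q') e1
    simp only [add_mul] at e
    exact hP.2.2.2 _ (hST p hp q' hq') _ (hST q hq q' hq') _ _ e
  have e := congrArg (u * ·) e2
  simp only [mul_add] at e
  exact hP.2.2.2 _ h1 _ h2 _ _ e

end aux

theorem stmt_13 {R : Type*} [NonUnitalSemiring R] (P : Set R) (hP : IsLeftHIdeal P) :
    (∀ A B : Set R, IsLeftHIdeal A → IsLeftHIdeal B → A * B ⊆ P → A ⊆ P ∨ B ⊆ P) ↔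
      (∀ a b : R, (∀ x : R, a * x * b ∈ P) → a ∈ P ∨ b ∈ P) := by
  constructor
  · intro hprime a b hab
    -- La = { n•a + r*a }, Rb = { r*b }, Lb = { n•b + r*b }
    set La : Set R := {x | ∃ (n : ℕ) (r : R), x = n • a + r * a} with hLa
    set Rb : Set R := {x | ∃ r : R, x = r * b} with hRb
    set Lb : Set R := {x | ∃ (n : ℕ) (r : R), x = n • b + r * b} with hLb
    have haLa : a ∈ La := ⟨1, 0, by simp⟩
    have hbLb : b ∈ Lb := ⟨1, 0, by simp⟩
    have hLa_add : ∀ u ∈ La, ∀ v ∈ La, u + v ∈ La := by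
      rintro _ ⟨n, r, rfl⟩ _ ⟨m, s, rfl⟩
      exact ⟨n + m, r + s, by rw [add_smul, add_mul]; abel⟩
    have hLa_mul : ∀ r : R, ∀ u ∈ La, r * u ∈ La := by
      rintro r _ ⟨n, s, rfl⟩
      refine ⟨0, n • r + r * s, ?_⟩
      simp [mul_add, add_mul, mul_smul_comm, smul_mul_assoc, mul_assoc]
    have hLb_add : ∀ u ∈ Lb, ∀ v ∈ Lb, u + v ∈ Lb := by
      rintro _ ⟨n, r, rfl⟩ _ ⟨m, s, rfl⟩
      exact ⟨n + m, r + s, by rw [add_smul, add_mul]; abel⟩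
    have hLb_mul : ∀ r : R, ∀ u ∈ Lb, r * u ∈ Lb := by
      rintro r _ ⟨n, s, rfl⟩
      refine ⟨0, n • r + r * s, ?_⟩
      simp [mul_add, add_mul, mul_smul_comm, smul_mul_assoc, mul_assoc]
    have hRb_add : ∀ u ∈ Rb, ∀ v ∈ Rb, u + v ∈ Rb := by
      rintro _ ⟨r, rfl⟩ _ ⟨s, rfl⟩
      exact ⟨r + s, by rw [add_mul]⟩
    have hRb_mul : ∀ r : R, ∀ u ∈ Rb, r * u ∈ Rb := by
      rintro r _ ⟨s, rfl⟩
      exact ⟨r * s, by rw [mul_assoc]⟩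
    -- first application: A = hCl La, B = hCl Rb
    have hbase1 : ∀ p ∈ La, ∀ q ∈ Rb, p * q ∈ P := by
      rintro _ ⟨n, r, rfl⟩ _ ⟨s, rfl⟩
      have h1 : a * (s * b) ∈ P := by rw [← mul_assoc]; exact hab s
      have h2 : (n • a + r * a) * (s * b) = n • (a * (s * b)) + r * (a * (s * b)) := by
        rw [add_mul, smul_mul_assoc, mul_assoc]
      rw [h2]
      exact hP.2.1 _ (nsmul_mem_of_leftH hP n h1) _ (hP.2.2.1 r _ h1)
    have hsub1 : hCl La * hCl Rb ⊆ P := by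
      rintro x ⟨u, hu, v, hv, rfl⟩
      exact key_mul_mem hP hbase1 hu hv
    rcases hprime (hCl La) (hCl Rb)
        (hCl_isLeftHIdeal ⟨a, haLa⟩ hLa_add hLa_mul)
        (hCl_isLeftHIdeal ⟨0, 0, by rw [zero_mul]⟩ hRb_add hRb_mul) hsub1 with h1 | h1
    · exact Or.inl (h1 (subset_hCl hLa_add haLa))
    · -- now every x * b ∈ P
      have hxb : ∀ x : R, x * b ∈ P := fun x =>
        h1 (subset_hCl hRb_add ⟨x, rfl⟩)
      -- second application: A = hCl univ, B = hCl Lb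
      have huniv_add : ∀ u ∈ (Set.univ : Set R), ∀ v ∈ (Set.univ : Set R), u + v ∈ (Set.univ : Set R) :=
        fun _ _ _ _ => Set.mem_univ _
      have hbase2 : ∀ p ∈ (Set.univ : Set R), ∀ q ∈ Lb, p * q ∈ P := by
        rintro p - _ ⟨m, s, rfl⟩
        have h2 : p * (m • b + s * b) = m • (p * b) + (p * s) * b := by
          rw [mul_add, mul_smul_comm, mul_assoc]
        rw [h2]
        exact hP.2.1 _ (nsmul_mem_of_leftH hP m (hxb p)) _ (hxb (p * s))
      have hsub2 : hCl (Set.univ : Set R) * hCl Lb ⊆ P := by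
        rintro x ⟨u, hu, v, hv, rfl⟩
        exact key_mul_mem hP hbase2 hu hv
      rcases hprime (hCl (Set.univ : Set R)) (hCl Lb)
          (hCl_isLeftHIdeal ⟨0, trivial⟩ huniv_add (fun _ _ _ => Set.mem_univ _))
          (hCl_isLeftHIdeal ⟨b, hbLb⟩ hLb_add hLb_mul) hsub2 with h2 | h2
      · exact Or.inl (h2 (subset_hCl huniv_add (Set.mem_univ a)))
      · exact Or.inr (h2 (subset_hCl hLb_add hbLb))
  · intro hcond A B hA hB hAB
    by_cases hAP : A ⊆ P
    · exact Or.inl hAP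
    · right
      obtain ⟨a, ha, haP⟩ := Set.not_subset.mp hAP
      intro b hb
      have : ∀ x : R, a * x * b ∈ P := by
        intro x
        have : a * (x * b) ∈ A * B := Set.mul_mem_mul ha (hB.2.2.1 x b hb)
        rw [mul_assoc]
        exact hAB this
      rcases hcond a b this with h | h
      · exact absurd h haP
      · exact h
end

section
/- In a hemiring R in which every h-ideal is h-idempotent, an h-ideal P ≠ R is irreducible (A ∩ B = P implies A = P or B = P, for h-ideals A, B) if and only if P is prime (AB ⊆ P implies A ⊆ P or B ⊆ P, for h-ideals A, B). -/
/-! Irreducible ⇒ prime: if `A * B ⊆ P`, the ideal quotients `B' = {z | A z ⊆ P}` and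
`A' = {x | x B' ⊆ P}` are h-ideals containing `B ∪ P` and `A ∪ P` with `A' * B' ⊆ P`. By
h-idempotence `A' ∩ B' = hCl ((A' ∩ B') * (A' ∩ B')) ⊆ hCl P = P`, so `A' ∩ B' = P`, and
irreducibility gives `A' = P` or `B' = P`. Prime ⇒ irreducible because `A * B ⊆ A ∩ B`. -/

open Pointwise

open Set

section HIdeal

variable {R : Type*} [NonUnitalSemiring R]

lemma hCl_mono {A B : Set R} (h : A ⊆ B) : hCl A ⊆ hCl B := by
  rintro x ⟨a, ha, b, hb, y, hy⟩
  exact ⟨a, h ha, b, h hb, y, hy⟩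

namespace IsHIdeal

variable {I J P : Set R}

lemma zero_mem (hI : IsHIdeal I) : (0 : R) ∈ I := by
  obtain ⟨a, ha⟩ := hI.1
  exact hI.2.2.2.2 a ha a ha 0 0 (by simp)

lemma hCl_subset (hI : IsHIdeal I) : hCl I ⊆ I := by
  rintro x ⟨a, ha, b, hb, y, hy⟩
  exact hI.2.2.2.2 a ha b hb x y hy

lemma inter (hI : IsHIdeal I) (hJ : IsHIdeal J) : IsHIdeal (I ∩ J) :=
  ⟨⟨0, hI.zero_mem, hJ.zero_mem⟩,
   fun a ha b hb => ⟨hI.2.1 a ha.1 b hb.1, hJ.2.1 a ha.2 b hb.2⟩,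
   fun r a ha => ⟨hI.2.2.1 r a ha.1, hJ.2.2.1 r a ha.2⟩,
   fun r a ha => ⟨hI.2.2.2.1 r a ha.1, hJ.2.2.2.1 r a ha.2⟩,
   fun a ha b hb x y h => ⟨hI.2.2.2.2 a ha.1 b hb.1 x y h, hJ.2.2.2.2 a ha.2 b hb.2 x y h⟩⟩

lemma mul_subset_inter (hI : IsHIdeal I) (hJ : IsHIdeal J) : I * J ⊆ I ∩ J := by
  rintro _ ⟨a, ha, b, hb, rfl⟩
  exact ⟨hI.2.2.2.1 b a ha, hJ.2.2.1 a b hb⟩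

lemma inter_subset_of_mul_subset (hidem : ∀ A : Set R, IsHIdeal A → hCl (A * A) = A)
    (hI : IsHIdeal I) (hJ : IsHIdeal J) (hP : IsHIdeal P) (h : I * J ⊆ P) : I ∩ J ⊆ P :=
  calc I ∩ J = hCl ((I ∩ J) * (I ∩ J)) := (hidem _ (hI.inter hJ)).symm
    _ ⊆ hCl P := hCl_mono ((mul_subset_mul inter_subset_left inter_subset_right).trans h)
    _ ⊆ P := hP.hCl_subset

end IsHIdeal

def colonRight (P S : Set R) : Set R := {z | ∀ x ∈ S, x * z ∈ P}

def colonLeft (P S : Set R) : Set R := {x | ∀ z ∈ S, x * z ∈ P}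

section Colon

variable {P S : Set R}

lemma subset_colonRight (hP : IsHIdeal P) : P ⊆ colonRight P S :=
  fun z hz x _ => hP.2.2.1 x z hz

lemma subset_colonLeft (hP : IsHIdeal P) : P ⊆ colonLeft P S :=
  fun x hx z _ => hP.2.2.2.1 z x hx

lemma isHIdeal_colonRight (hP : IsHIdeal P) (hS : ∀ r : R, ∀ x ∈ S, x * r ∈ S) :
    IsHIdeal (colonRight P S) := by
  refine ⟨hP.1.mono (subset_colonRight hP), ?_, ?_, ?_, ?_⟩
  · intro a ha b hb x hx
    rw [mul_add]
    exact hP.2.1 _ (ha x hx) _ (hb x hx)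
  · intro r a ha x hx
    rw [← mul_assoc]
    exact ha _ (hS r x hx)
  · intro r a ha x hx
    rw [← mul_assoc]
    exact hP.2.2.2.1 r _ (ha x hx)
  · intro a ha b hb u y h x hx
    refine hP.2.2.2.2 _ (ha x hx) _ (hb x hx) (x * u) (x * y) ?_
    simpa only [mul_add] using congrArg (x * ·) h

lemma isHIdeal_colonLeft (hP : IsHIdeal P) (hS : ∀ r : R, ∀ z ∈ S, r * z ∈ S) :
    IsHIdeal (colonLeft P S) := by
  refine ⟨hP.1.mono (subset_colonLeft hP), ?_, ?_, ?_, ?_⟩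
  · intro a ha b hb z hz
    rw [add_mul]
    exact hP.2.1 _ (ha z hz) _ (hb z hz)
  · intro r a ha z hz
    rw [mul_assoc]
    exact hP.2.2.1 r _ (ha z hz)
  · intro r a ha z hz
    rw [mul_assoc]
    exact ha _ (hS r z hz)
  · intro a ha b hb u y h z hz
    refine hP.2.2.2.2 _ (ha z hz) _ (hb z hz) (u * z) (y * z) ?_
    simpa only [add_mul] using congrArg (· * z) h

end Colon

end HIdeal

theorem stmt_17_general {R : Type*} [NonUnitalSemiring R]
    (hidem : ∀ A : Set R, IsHIdeal A → hCl (A * A) = A)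
    (P : Set R) (hP : IsHIdeal P) :
    (∀ A B : Set R, IsHIdeal A → IsHIdeal B → A ∩ B = P → A = P ∨ B = P) ↔
      (∀ A B : Set R, IsHIdeal A → IsHIdeal B → A * B ⊆ P → A ⊆ P ∨ B ⊆ P) := by
  constructor
  · intro hirr A B hA hB hAB
    set B' := colonRight P A
    set A' := colonLeft P B'
    have hB' : IsHIdeal B' := isHIdeal_colonRight hP hA.2.2.2.1
    have hA' : IsHIdeal A' := isHIdeal_colonLeft hP hB'.2.2.1
    have hBB' : B ⊆ B' := fun b hb a ha => hAB (mul_mem_mul ha hb)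
    have hAA' : A ⊆ A' := fun a ha z hz => hz a ha
    have hmul : A' * B' ⊆ P := by
      rintro _ ⟨x, hx, z, hz, rfl⟩
      exact hx z hz
    have hmeet : A' ∩ B' = P :=
      (hA'.inter_subset_of_mul_subset hidem hB' hP hmul).antisymm
        (subset_inter (subset_colonLeft hP) (subset_colonRight hP))
    rcases hirr A' B' hA' hB' hmeet with h | h
    exacts [Or.inl (h ▸ hAA'), Or.inr (h ▸ hBB')]
  · intro hprime A B hA hB hAB
    exact (hprime A B hA hB (hAB ▸ hA.mul_subset_inter hB)).imp
      (fun h => h.antisymm (hAB ▸ inter_subset_left))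
      (fun h => h.antisymm (hAB ▸ inter_subset_right))

theorem stmt_17 {R : Type*} [NonUnitalSemiring R]
    (hidem : ∀ A : Set R, IsHIdeal A → hCl (A * A) = A)
    (P : Set R) (hP : IsHIdeal P) (hne : P ≠ Set.univ) :
    (∀ A B : Set R, IsHIdeal A → IsHIdeal B → A ∩ B = P → A = P ∨ B = P) ↔
      (∀ A B : Set R, IsHIdeal A → IsHIdeal B → A * B ⊆ P → A ⊆ P ∨ B ⊆ P) :=
  stmt_17_general hidem P hP
end
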